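/- For every ε > 0 there exists δ > 0 such that for each μ ∈ (1/2, 3/2) and each α ∈ ℝ there is a continuous map Ǧ_{μ,α} : X → X with sup_{p∈X} ‖Ǧ_{μ,α}(p) − F(p)‖ < ε which agrees with the translated Neimark–Sacker model map near p* := ((3−√5)/2,(3−√5)/2): Ǧ_{μ,α}(z) = p* + N_{δ,μ,α}(z − p*) whenever ‖z − p*‖ ≤ 3δ, where N_{δ,μ,α}(w) := −δ·tanh(μ|w|/δ)·e^{iα}·w/|w| for w ≠ 0 and N_{δ,μ,α}(0) := 0 (identifying ℝ² with ℂ). Consequently p* is a fixed point of Ǧ_{μ,α} for every μ, it is locally attracting for 1/2 < μ < 1 and locally repelling for 1 < μ < 3/2, and for 1 < μ < 3/2 the circle {z : ‖z − p*‖ = r(μ)} is Ǧ_{μ,α}-invariant and attracts every orbit starting at a point z with 0 < ‖z − p*‖ ≤ 3δ, where r(μ) is the unique positive solution of δ·tanh(μr/δ) = r; i.e. the family Ǧ_{μ,α} undergoes a Neimark–Sacker bifurcation at p* as μ crosses 1. -/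

import Mathlib

open Set Filter Topology

/-- The minimal RS flip-flop map. -/
noncomputable def F (p : ℝ × ℝ) : ℝ × ℝ :=
  (p.2 * (1 - p.1) / (p.1 + p.2 - p.1 * p.2),
   p.1 * (1 - p.2) / (p.1 + p.2 - p.1 * p.2))

/-- The domain X = [0,1]² minus the two corners (0,0) and (1,1). -/
def X : Set (ℝ × ℝ) :=
  (Icc (0:ℝ) 1 ×ˢ Icc (0:ℝ) 1) \ {((0:ℝ), (0:ℝ)), ((1:ℝ), (1:ℝ))}

/-- The Euclidean norm on ℝ². -/
noncomputable def euclNorm (p : ℝ × ℝ) : ℝ := Real.sqrt (p.1 ^ 2 + p.2 ^ 2)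

/-- The fixed point p* = ((3−√5)/2, (3−√5)/2). -/
noncomputable def pstar : ℝ × ℝ := ((3 - Real.sqrt 5) / 2, (3 - Real.sqrt 5) / 2)

/-- The Neimark–Sacker model map on ℂ: N(z) = −δ·tanh(μ|z|/δ)·e^{iα}·z/|z|, N(0)=0. -/
noncomputable def N (δ μ α : ℝ) (z : ℂ) : ℂ :=
  if z = 0 then 0
  else -(δ : ℂ) * (Real.tanh (μ * ‖z‖ / δ) : ℝ) *
    Complex.exp ((α : ℂ) * Complex.I) * z / (‖z‖ : ℂ)

/-- The Neimark–Sacker model map transported to ℝ², identifying ℝ² with ℂ. -/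
noncomputable def Npert (δ μ α : ℝ) (w : ℝ × ℝ) : ℝ × ℝ :=
  Complex.equivRealProd (N δ μ α (Complex.equivRealProd.symm w))


lemma my_tanh_eq : Real.tanh = fun x => Real.sinh x / Real.cosh x :=
  funext fun x => Real.tanh_eq_sinh_div_cosh x

lemma my_hasDerivAt_tanh (x : ℝ) : HasDerivAt Real.tanh (1 / Real.cosh x ^ 2) x := by
  rw [my_tanh_eq]
  have h := (Real.hasDerivAt_sinh x).fun_div (Real.hasDerivAt_cosh x) (Real.cosh_pos x).ne'
  refine h.congr_deriv ?_
  have := Real.cosh_sq_sub_sinh_sq x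
  rw [← this]; ring

lemma my_continuous_tanh : Continuous Real.tanh := by
  rw [my_tanh_eq]
  exact Real.continuous_sinh.div Real.continuous_cosh fun x => (Real.cosh_pos x).ne'

lemma my_tanh_lt_one (x : ℝ) : Real.tanh x < 1 := by
  rw [Real.tanh_eq_sinh_div_cosh, div_lt_one (Real.cosh_pos x)]
  nlinarith [Real.cosh_sub_sinh x, Real.exp_pos (-x)]

lemma my_tanh_pos {x : ℝ} (hx : 0 < x) : 0 < Real.tanh x := by
  rw [Real.tanh_eq_sinh_div_cosh]
  exact div_pos (Real.sinh_pos_iff.2 hx) (Real.cosh_pos x)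

lemma my_tanh_nonneg {x : ℝ} (hx : 0 ≤ x) : 0 ≤ Real.tanh x := by
  rcases hx.eq_or_lt with h | h
  · simp [← h, Real.tanh_zero]
  · exact (my_tanh_pos h).le

lemma my_tanh_strictMono : StrictMono Real.tanh := by
  apply strictMono_of_deriv_pos
  intro x
  rw [(my_hasDerivAt_tanh x).deriv]
  positivity

lemma my_tanh_lt_self {x : ℝ} (hx : 0 < x) : Real.tanh x < x := by
  have hdiff : Differentiable ℝ Real.tanh := fun y => (my_hasDerivAt_tanh y).differentiableAt
  obtain ⟨c, hc, hderiv⟩ := exists_deriv_eq_slope Real.tanh hx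
    my_continuous_tanh.continuousOn hdiff.differentiableOn
  · rw [(my_hasDerivAt_tanh c).deriv, Real.tanh_zero, sub_zero, sub_zero] at hderiv
    have hc1 : 1 < Real.cosh c := Real.one_lt_cosh.2 (ne_of_gt hc.1)
    have : Real.tanh x / x < 1 := by
      rw [← hderiv]
      rw [div_lt_one (by nlinarith)]
      nlinarith
    calc Real.tanh x = (Real.tanh x / x) * x := by field_simp
    _ < 1 * x := by apply mul_lt_mul_of_pos_right this hx
    _ = x := one_mul x

lemma my_strictConcaveOn_tanh : StrictConcaveOn ℝ (Ici 0) Real.tanh := by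
  apply StrictAntiOn.strictConcaveOn_of_deriv (convex_Ici 0) my_continuous_tanh.continuousOn
  rw [interior_Ici]
  intro a ha b hb hab
  rw [(my_hasDerivAt_tanh a).deriv, (my_hasDerivAt_tanh b).deriv]
  have h1 : Real.cosh a < Real.cosh b := by
    rw [Real.cosh_lt_cosh]
    rw [abs_of_pos ha, abs_of_pos (lt_trans ha hab)]
    exact hab
  have h2 : 0 < Real.cosh a := Real.cosh_pos a
  apply div_lt_div_of_pos_left one_pos (by positivity) (by nlinarith)

lemma my_tanh_chord {x l : ℝ} (hx : 0 < x) (hl0 : 0 < l) (hl1 : l < 1) :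
    l * Real.tanh x < Real.tanh (l * x) := by
  have h := my_strictConcaveOn_tanh.2 self_mem_Ici (mem_Ici.mpr hx.le) hx.ne
    (show (0:ℝ) < 1 - l by linarith) hl0 (by ring)
  simpa [Real.tanh_zero, smul_eq_mul] using h
noncomputable def ι (p : ℝ × ℝ) : ℂ := Complex.equivRealProd.symm p

lemma ι_re (p : ℝ × ℝ) : (ι p).re = p.1 := by
  simp [ι, Complex.equivRealProd_symm_apply]

lemma ι_im (p : ℝ × ℝ) : (ι p).im = p.2 := by
  simp [ι, Complex.equivRealProd_symm_apply]

lemma enorm_eq (p : ℝ × ℝ) : euclNorm p = ‖ι p‖ := by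
  rw [Complex.norm_def, Complex.normSq_apply, ι_re, ι_im, euclNorm]
  ring_nf

lemma ι_sub (a b : ℝ × ℝ) : ι (a - b) = ι a - ι b := by
  apply Complex.ext <;> simp [ι_re, ι_im]

lemma ι_zero : ι 0 = 0 := by
  apply Complex.ext <;> simp [ι_re, ι_im]

lemma ι_eq_zero {p : ℝ × ℝ} : ι p = 0 ↔ p = 0 := by
  constructor
  · intro h
    have h1 := congrArg Complex.re h
    have h2 := congrArg Complex.im h
    rw [ι_re] at h1; rw [ι_im] at h2
    simp at h1 h2
    exact Prod.ext h1 h2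
  · intro h; rw [h, ι_zero]

lemma continuous_ι : Continuous ι := by
  have : ι = fun p : ℝ × ℝ => (p.1 : ℂ) + (p.2 : ℂ) * Complex.I := by
    funext p; exact Complex.equivRealProd_symm_apply p
  rw [this]
  continuity

lemma continuous_eqRP : Continuous (Complex.equivRealProd : ℂ → ℝ × ℝ) := by
  have : (Complex.equivRealProd : ℂ → ℝ × ℝ) = fun z => (z.re, z.im) := rfl
  rw [this]
  exact Complex.continuous_re.prodMk Complex.continuous_im

lemma enorm_nonneg (p : ℝ × ℝ) : 0 ≤ euclNorm p := Real.sqrt_nonneg _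

lemma enorm_triangle (a b : ℝ × ℝ) : euclNorm (a + b) ≤ euclNorm a + euclNorm b := by
  have : ι (a + b) = ι a + ι b := by apply Complex.ext <;> simp [ι_re, ι_im]
  rw [enorm_eq, enorm_eq, enorm_eq, this]
  exact norm_add_le _ _

lemma euclNorm_smul (t : ℝ) (v : ℝ × ℝ) : euclNorm (t • v) = |t| * euclNorm v := by
  unfold euclNorm
  have h1 : (t • v).1 = t * v.1 := rfl
  have h2 : (t • v).2 = t * v.2 := rfl
  rw [h1, h2]
  rw [show (t * v.1) ^ 2 + (t * v.2) ^ 2 = t ^ 2 * (v.1 ^ 2 + v.2 ^ 2) by ring]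
  rw [Real.sqrt_mul (sq_nonneg t), Real.sqrt_sq_eq_abs]

lemma abs_fst_le (v : ℝ × ℝ) : |v.1| ≤ euclNorm v := by
  rw [← Real.sqrt_sq_eq_abs]
  exact Real.sqrt_le_sqrt (by nlinarith [sq_nonneg v.2])

lemma abs_snd_le (v : ℝ × ℝ) : |v.2| ≤ euclNorm v := by
  rw [← Real.sqrt_sq_eq_abs]
  exact Real.sqrt_le_sqrt (by nlinarith [sq_nonneg v.1])

lemma dist_le_enorm (p q : ℝ × ℝ) : dist p q ≤ euclNorm (p - q) := by
  rw [Prod.dist_eq]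
  apply max_le
  · rw [Real.dist_eq]
    exact abs_fst_le (p - q)
  · rw [Real.dist_eq]
    exact abs_snd_le (p - q)

lemma enorm_le_two_dist (p q : ℝ × ℝ) : euclNorm (p - q) ≤ 2 * dist p q := by
  have h1 : |(p - q).1| ≤ dist p q := by
    rw [Prod.dist_eq]; exact le_max_of_le_left (le_of_eq (Real.dist_eq _ _).symm)
  have h2 : |(p - q).2| ≤ dist p q := by
    rw [Prod.dist_eq]; exact le_max_of_le_right (le_of_eq (Real.dist_eq _ _).symm)
  have hd : 0 ≤ dist p q := dist_nonneg
  unfold euclNorm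
  rw [show (2 : ℝ) * dist p q = Real.sqrt ((2 * dist p q) ^ 2) by
    rw [Real.sqrt_sq (by linarith)]]
  apply Real.sqrt_le_sqrt
  nlinarith [abs_nonneg (p-q).1, abs_nonneg (p-q).2, sq_abs (p-q).1, sq_abs (p-q).2]

lemma euclNorm_neg (v : ℝ × ℝ) : euclNorm (-v) = euclNorm v := by
  unfold euclNorm
  have h1 : (-v).1 = -v.1 := rfl
  have h2 : (-v).2 = -v.2 := rfl
  rw [h1, h2, neg_pow, neg_pow]
  norm_num
lemma abs_N {δ μ : ℝ} (α : ℝ) (hδ : 0 < δ) (hμ : 0 < μ) (w : ℂ) :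
    ‖N δ μ α w‖ = δ * Real.tanh (μ * ‖w‖ / δ) := by
  by_cases hw : w = 0
  · simp [N, hw, Real.tanh_zero]
  · rw [N, if_neg hw]
    have habs : (0:ℝ) < ‖w‖ := norm_pos_iff.mpr hw
    have htanh : 0 ≤ Real.tanh (μ * ‖w‖ / δ) := my_tanh_nonneg (by positivity)
    rw [norm_div, norm_mul, norm_mul, norm_mul, Complex.norm_exp_ofReal_mul_I]
    simp only [norm_neg, Complex.norm_real, Real.norm_eq_abs, abs_norm]
    rw [abs_of_pos hδ, abs_of_nonneg htanh]
    field_simp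

lemma ι_Npert (δ μ α : ℝ) (w : ℝ × ℝ) : ι (Npert δ μ α w) = N δ μ α (ι w) := by
  unfold Npert ι
  rw [Equiv.symm_apply_apply]

lemma enorm_Npert {δ μ : ℝ} (α : ℝ) (hδ : 0 < δ) (hμ : 0 < μ) (w : ℝ × ℝ) :
    euclNorm (Npert δ μ α w) = δ * Real.tanh (μ * euclNorm w / δ) := by
  rw [enorm_eq, ι_Npert, abs_N α hδ hμ, enorm_eq]

lemma Npert_zero (δ μ α : ℝ) : Npert δ μ α 0 = 0 := by
  unfold Npert
  have h0 : Complex.equivRealProd.symm (0 : ℝ × ℝ) = 0 := ι_zero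
  rw [h0, N, if_pos rfl]
  rfl

lemma continuous_N {δ μ : ℝ} (α : ℝ) (hδ : 0 < δ) (hμ : 0 < μ) : Continuous (N δ μ α) := by
  rw [continuous_iff_continuousAt]
  intro z
  by_cases hz : z = 0
  · subst hz
    have hN0 : N δ μ α 0 = 0 := by rw [N, if_pos rfl]
    rw [ContinuousAt, hN0]
    apply squeeze_zero_norm (a := fun w => μ * ‖w‖)
    · intro w
      have := abs_N α hδ hμ w
      rw [this]
      have h1 : Real.tanh (μ * ‖w‖ / δ) ≤ μ * ‖w‖ / δ := by
        rcases (lt_or_eq_of_le (by positivity : (0:ℝ) ≤ μ * ‖w‖ / δ)) with h | h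
        · exact (my_tanh_lt_self h).le
        · rw [← h, Real.tanh_zero]
      calc δ * Real.tanh (μ * ‖w‖ / δ) ≤ δ * (μ * ‖w‖ / δ) := by
            exact mul_le_mul_of_nonneg_left h1 hδ.le
      _ = μ * ‖w‖ := by field_simp
    · have : Tendsto (fun w : ℂ => μ * ‖w‖) (𝓝 0) (𝓝 (μ * ‖(0:ℂ)‖)) :=
        (continuous_const.mul continuous_norm).tendsto 0
      simpa using this
  · have hopen : IsOpen {w : ℂ | w ≠ 0} := isOpen_compl_singleton
    have hmem : {w : ℂ | w ≠ 0} ∈ 𝓝 z := hopen.mem_nhds hz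
    have heq : ∀ w ∈ {w : ℂ | w ≠ 0}, N δ μ α w =
        -(δ : ℂ) * (Real.tanh (μ * ‖w‖ / δ) : ℝ) *
        Complex.exp ((α : ℂ) * Complex.I) * w / (‖w‖ : ℂ) := by
      intro w hw; rw [N, if_neg hw]
    apply ContinuousAt.congr _ (Filter.eventuallyEq_of_mem hmem fun w hw => (heq w hw).symm)
    apply ContinuousAt.div
    · apply ContinuousAt.mul
      · apply ContinuousAt.mul
        · apply ContinuousAt.mul continuousAt_const
          apply Complex.continuous_ofReal.continuousAt.comp
          apply (my_continuous_tanh.continuousAt).comp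
          exact ((continuous_const.mul continuous_norm).div_const δ).continuousAt
        · exact continuousAt_const
      · exact continuousAt_id
    · exact (Complex.continuous_ofReal.comp continuous_norm).continuousAt
    · simpa using norm_ne_zero_iff.mpr hz

lemma continuous_Npert {δ μ : ℝ} (α : ℝ) (hδ : 0 < δ) (hμ : 0 < μ) :
    Continuous (Npert δ μ α) := by
  unfold Npert
  exact continuous_eqRP.comp ((continuous_N α hδ hμ).comp continuous_ι)
lemma X_unpack {p : ℝ × ℝ} (hp : p ∈ X) :
    0 ≤ p.1 ∧ p.1 ≤ 1 ∧ 0 ≤ p.2 ∧ p.2 ≤ 1 ∧ p ≠ ((0:ℝ),(0:ℝ)) ∧ p ≠ ((1:ℝ),(1:ℝ)) := by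
  obtain ⟨h1, h2⟩ := hp
  rw [mem_prod] at h1
  obtain ⟨⟨hx0, hx1⟩, ⟨hy0, hy1⟩⟩ := h1
  simp only [mem_insert_iff, mem_singleton_iff] at h2
  push_neg at h2
  exact ⟨hx0, hx1, hy0, hy1, h2.1, h2.2⟩

lemma X_pack {p : ℝ × ℝ} (h : 0 ≤ p.1 ∧ p.1 ≤ 1 ∧ 0 ≤ p.2 ∧ p.2 ≤ 1 ∧
    p ≠ ((0:ℝ),(0:ℝ)) ∧ p ≠ ((1:ℝ),(1:ℝ))) : p ∈ X := by
  obtain ⟨hx0, hx1, hy0, hy1, hc0, hc1⟩ := h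
  constructor
  · rw [mem_prod]; exact ⟨⟨hx0, hx1⟩, ⟨hy0, hy1⟩⟩
  · simp only [mem_insert_iff, mem_singleton_iff]
    push_neg
    exact ⟨hc0, hc1⟩

lemma denom_pos {p : ℝ × ℝ} (hp : p ∈ X) : 0 < p.1 + p.2 - p.1 * p.2 := by
  obtain ⟨hx0, hx1, hy0, hy1, hc0, -⟩ := X_unpack hp
  rcases lt_or_eq_of_le hx0 with h | h
  · rcases lt_or_eq_of_le hy0 with h' | h'
    · nlinarith
    · nlinarith
  · rcases lt_or_eq_of_le hy0 with h' | h'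
    · nlinarith
    · exfalso; exact hc0 (Prod.ext_iff.2 ⟨h.symm, h'.symm⟩)

lemma continuousAt_F {p : ℝ × ℝ} (hp : p.1 + p.2 - p.1 * p.2 ≠ 0) : ContinuousAt F p := by
  unfold F
  apply ContinuousAt.prodMk
  · exact ContinuousAt.div (by fun_prop) (by fun_prop) hp
  · exact ContinuousAt.div (by fun_prop) (by fun_prop) hp

lemma continuousOn_F : ContinuousOn F X :=
  fun p hp => (continuousAt_F (denom_pos hp).ne').continuousWithinAt

lemma mapsTo_F : MapsTo F X X := by
  intro p hp
  obtain ⟨hx0, hx1, hy0, hy1, hc0, hc1⟩ := X_unpack hp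
  have hD := denom_pos hp
  set x := p.1 with hxdef
  set y := p.2 with hydef
  set D := x + y - x * y with hDdef
  apply X_pack
  have hF1 : (F p).1 = y * (1 - x) / D := rfl
  have hF2 : (F p).2 = x * (1 - y) / D := rfl
  refine ⟨?_, ?_, ?_, ?_, ?_, ?_⟩
  · rw [hF1]; exact div_nonneg (mul_nonneg hy0 (by linarith)) hD.le
  · rw [hF1, div_le_one hD]; nlinarith
  · rw [hF2]; exact div_nonneg (mul_nonneg hx0 (by linarith)) hD.le
  · rw [hF2, div_le_one hD]; nlinarith
  · intro hFeq
    have h1 : (F p).1 = 0 := by rw [hFeq]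
    have h2 : (F p).2 = 0 := by rw [hFeq]
    rw [hF1, div_eq_zero_iff] at h1
    rw [hF2, div_eq_zero_iff] at h2
    rcases h1 with h1 | h1; swap
    · exact absurd h1 hD.ne'
    rcases h2 with h2 | h2; swap
    · exact absurd h2 hD.ne'
    rcases mul_eq_zero.1 h1 with hy | hx1'
    · rcases mul_eq_zero.1 h2 with hx | hy1'
      · exact hc0 (Prod.ext_iff.2 ⟨hx, hy⟩)
      · linarith
    · rcases mul_eq_zero.1 h2 with hx | hy1'
      · linarith
      · exact hc1 (Prod.ext_iff.2 ⟨by simp only [← hxdef]; linarith, by simp only [← hydef]; linarith⟩)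
  · intro hFeq
    have h1 : (F p).1 = 1 := by rw [hFeq]
    have h2 : (F p).2 = 1 := by rw [hFeq]
    rw [hF1, div_eq_one_iff_eq hD.ne'] at h1
    rw [hF2, div_eq_one_iff_eq hD.ne'] at h2
    have hx : x = 0 := by nlinarith
    have hy : y = 0 := by nlinarith
    exact hc0 (Prod.ext_iff.2 ⟨hx, hy⟩)
lemma sqrt5_sq : Real.sqrt 5 ^ 2 = 5 := Real.sq_sqrt (by norm_num)

lemma sqrt5_lt : Real.sqrt 5 < 2.4 := by
  rw [show (2.4:ℝ) = Real.sqrt (2.4^2) from (Real.sqrt_sq (by norm_num)).symm]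
  apply Real.sqrt_lt_sqrt (by norm_num) (by norm_num)

lemma sqrt5_gt : 2 < Real.sqrt 5 := by
  rw [show (2:ℝ) = Real.sqrt (2^2) from (Real.sqrt_sq (by norm_num)).symm]
  apply Real.sqrt_lt_sqrt (by norm_num) (by norm_num)

lemma cstar_gt : (0.3:ℝ) < (3 - Real.sqrt 5) / 2 := by linarith [sqrt5_lt]

lemma cstar_lt : (3 - Real.sqrt 5) / 2 < 0.5 := by linarith [sqrt5_gt]

lemma pstar_denom_pos : 0 < pstar.1 + pstar.2 - pstar.1 * pstar.2 := by
  have h1 := cstar_gt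
  have h2 := cstar_lt
  show 0 < (3 - Real.sqrt 5)/2 + (3 - Real.sqrt 5)/2 - (3 - Real.sqrt 5)/2 * ((3 - Real.sqrt 5)/2)
  nlinarith

lemma F_pstar : F pstar = pstar := by
  have h1 := cstar_gt
  have h2 := cstar_lt
  have h5 := sqrt5_sq
  have hD := pstar_denom_pos
  set c := (3 - Real.sqrt 5) / 2 with hc
  have hceq : c ^ 2 - 3 * c + 1 = 0 := by
    rw [hc]; nlinarith
  have hp1 : pstar.1 = c := rfl
  have hp2 : pstar.2 = c := rfl
  apply Prod.ext_iff.2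
  constructor
  · show pstar.2 * (1 - pstar.1) / (pstar.1 + pstar.2 - pstar.1 * pstar.2) = c
    rw [hp1, hp2]
    rw [div_eq_iff (by rw [hp1, hp2] at hD; exact hD.ne')]
    linear_combination c * hceq
  · show pstar.1 * (1 - pstar.2) / (pstar.1 + pstar.2 - pstar.1 * pstar.2) = c
    rw [hp1, hp2]
    rw [div_eq_iff (by rw [hp1, hp2] at hD; exact hD.ne')]
    linear_combination c * hceq

lemma continuousAt_F_pstar : ContinuousAt F pstar := continuousAt_F pstar_denom_pos.ne'
section dyn
variable {δ μ : ℝ}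
noncomputable def fd (δ μ r : ℝ) : ℝ := δ * Real.tanh (μ * r / δ)


lemma fd_zero : fd δ μ 0 = 0 := by simp [fd, Real.tanh_zero]

lemma fd_nonneg (hδ : 0 < δ) (hμ : 0 < μ) {r : ℝ} (hr : 0 ≤ r) : 0 ≤ fd δ μ r :=
  mul_nonneg hδ.le (my_tanh_nonneg (by positivity))

lemma fd_pos (hδ : 0 < δ) (hμ : 0 < μ) {r : ℝ} (hr : 0 < r) : 0 < fd δ μ r :=
  mul_pos hδ (my_tanh_pos (by positivity))

lemma fd_lt_delta (hδ : 0 < δ) (r : ℝ) : fd δ μ r < δ := by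
  have := my_tanh_lt_one (μ * r / δ)
  calc fd δ μ r < δ * 1 := by exact mul_lt_mul_of_pos_left this hδ
  _ = δ := mul_one δ

lemma fd_le_mul (hδ : 0 < δ) (hμ : 0 < μ) {r : ℝ} (hr : 0 ≤ r) : fd δ μ r ≤ μ * r := by
  rcases lt_or_eq_of_le hr with h | h
  · have h1 : Real.tanh (μ * r / δ) < μ * r / δ := my_tanh_lt_self (by positivity)
    calc fd δ μ r ≤ δ * (μ * r / δ) := mul_le_mul_of_nonneg_left h1.le hδ.le
    _ = μ * r := by field_simp
  · rw [← h]; simp [fd_zero]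

lemma fd_strictMono (hδ : 0 < δ) (hμ : 0 < μ) : StrictMono (fd δ μ) := by
  intro a b hab
  unfold fd
  apply mul_lt_mul_of_pos_left _ hδ
  apply my_tanh_strictMono
  apply div_lt_div_of_pos_right _ hδ
  exact mul_lt_mul_of_pos_left hab hμ

lemma fd_continuous (hδ : 0 < δ) : Continuous (fd δ μ) := by
  unfold fd
  exact continuous_const.mul (my_continuous_tanh.comp ((continuous_const.mul continuous_id).div_const δ))

lemma fd_gt_of_lt_fix (hδ : 0 < δ) (hμ : 0 < μ) {a b : ℝ}
    (hfix : fd δ μ b = b) (ha : 0 < a) (hab : a < b) : a < fd δ μ a := by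
  have hb : 0 < b := lt_trans ha hab
  have hx : (0:ℝ) < μ * b / δ := by positivity
  have hl0 : 0 < a / b := by positivity
  have hl1 : a / b < 1 := (div_lt_one hb).2 hab
  have hc := my_tanh_chord hx hl0 hl1
  have harg : a / b * (μ * b / δ) = μ * a / δ := by field_simp
  rw [harg] at hc
  have htb : Real.tanh (μ * b / δ) = b / δ := by
    have hfix' : δ * Real.tanh (μ * b / δ) = b := hfix
    rw [eq_div_iff hδ.ne']
    linarith
  rw [htb] at hc
  have : a / δ < Real.tanh (μ * a / δ) := by
    calc a / δ = a / b * (b / δ) := by field_simp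
    _ < _ := hc
  calc a = δ * (a / δ) := by field_simp
  _ < δ * Real.tanh (μ * a / δ) := mul_lt_mul_of_pos_left this hδ
  _ = fd δ μ a := rfl

lemma fd_lt_of_gt_fix (hδ : 0 < δ) (hμ : 0 < μ) {a b : ℝ}
    (hfix : fd δ μ a = a) (ha : 0 < a) (hab : a < b) : fd δ μ b < b := by
  have hb : 0 < b := lt_trans ha hab
  have hx : (0:ℝ) < μ * b / δ := by positivity
  have hl0 : 0 < a / b := by positivity
  have hl1 : a / b < 1 := (div_lt_one hb).2 hab
  have hc := my_tanh_chord hx hl0 hl1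
  have harg : a / b * (μ * b / δ) = μ * a / δ := by field_simp
  rw [harg] at hc
  have hta : Real.tanh (μ * a / δ) = a / δ := by
    have hfix' : δ * Real.tanh (μ * a / δ) = a := hfix
    rw [eq_div_iff hδ.ne']
    linarith
  rw [hta] at hc
  have h2 : Real.tanh (μ * b / δ) < b / δ := by
    have h3 : a * Real.tanh (μ * b / δ) < a * (b / δ) := by
      have h4 : a / b * Real.tanh (μ * b / δ) * b < a / δ * b := mul_lt_mul_of_pos_right hc hb
      calc a * Real.tanh (μ * b / δ) = a / b * Real.tanh (μ * b / δ) * b := by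
            field_simp
      _ < a / δ * b := h4
      _ = a * (b / δ) := by field_simp
    exact lt_of_mul_lt_mul_left h3 ha.le
  calc fd δ μ b = δ * Real.tanh (μ * b / δ) := rfl
  _ < δ * (b / δ) := mul_lt_mul_of_pos_left h2 hδ
  _ = b := by field_simp


end dyn
lemma fd_exists_fix {δ μ : ℝ} (hδ : 0 < δ) (hμ1 : 1 < μ) :
    ∃ rs : ℝ, 0 < rs ∧ rs < δ ∧ fd δ μ rs = rs := by
  have hμ : 0 < μ := by linarith
  have h0 : HasDerivAt (fun r : ℝ => μ * r / δ) (μ / δ) 0 := by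
    simpa using ((hasDerivAt_id (0:ℝ)).const_mul μ).div_const δ
  have h1 : HasDerivAt (fun r : ℝ => Real.tanh (μ * r / δ))
      (1 / Real.cosh (μ * 0 / δ) ^ 2 * (μ / δ)) 0 := by
    have := (my_hasDerivAt_tanh (μ * 0 / δ)).comp 0 h0; exact this
  have h2 : HasDerivAt (fd δ μ) μ 0 := by
    have h3 := h1.const_mul δ
    simp only [mul_zero, zero_div, Real.cosh_zero, one_pow, div_one, one_mul] at h3
    have hh : δ * (μ / δ) = μ := by field_simp
    rw [hh] at h3
    exact h3
  have hslope : Tendsto (slope (fd δ μ) 0) (𝓝[≠] 0) (𝓝 μ) :=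
    hasDerivAt_iff_tendsto_slope.mp h2
  have hslope' : Tendsto (slope (fd δ μ) 0) (𝓝[>] 0) (𝓝 μ) :=
    hslope.mono_left (nhdsWithin_mono 0 fun r hr => ne_of_gt hr)
  have hev1 : ∀ᶠ r in 𝓝[>] (0:ℝ), 1 < slope (fd δ μ) 0 r :=
    hslope'.eventually (eventually_gt_nhds hμ1)
  have hev2 : Ioo (0:ℝ) δ ∈ 𝓝[>] (0:ℝ) := Ioo_mem_nhdsGT_of_mem ⟨le_refl 0, hδ⟩
  obtain ⟨r₁, hr₁a, hr₁b⟩ := (hev1.and (eventually_of_mem hev2 (fun x hx => hx))).exists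
  obtain ⟨hr₁0, hr₁δ⟩ := hr₁b
  have hfdr₁ : r₁ < fd δ μ r₁ := by
    rw [slope_def_field, fd_zero, sub_zero, sub_zero] at hr₁a
    exact (one_lt_div hr₁0).1 hr₁a
  have hcont : ContinuousOn (fun r => fd δ μ r - r) (Icc r₁ δ) :=
    ((fd_continuous hδ).sub continuous_id).continuousOn
  have hsub : (0:ℝ) ∈ Icc (fd δ μ δ - δ) (fd δ μ r₁ - r₁) :=
    ⟨by linarith [fd_lt_delta (μ := μ) hδ δ], by linarith⟩
  obtain ⟨rs, hrsmem, hrs⟩ := intermediate_value_Icc' (le_of_lt hr₁δ) hcont hsub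
  have hfix : fd δ μ rs = rs := by
    have : fd δ μ rs - rs = 0 := hrs
    linarith
  have hlt : rs < δ := by
    rcases lt_or_eq_of_le hrsmem.2 with h | h
    · exact h
    · exfalso; rw [h] at hfix; linarith [fd_lt_delta (μ := μ) hδ δ]
  exact ⟨rs, lt_of_lt_of_le hr₁0 hrsmem.1, hlt, hfix⟩

lemma fd_iter_tendsto {δ μ : ℝ} (hδ : 0 < δ) (hμ : 0 < μ) {rs r₀ : ℝ}
    (hfix : fd δ μ rs = rs) (hrs : 0 < rs) (hr₀ : 0 < r₀) :
    Tendsto (fun n : ℕ => (fd δ μ)^[n] r₀) atTop (𝓝 rs) := by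
  set u : ℕ → ℝ := fun n => (fd δ μ)^[n] r₀ with hu
  have hsucc : ∀ n, u (n + 1) = fd δ μ (u n) := fun n => Function.iterate_succ_apply' _ _ _
  rcases lt_trichotomy r₀ rs with hlt | heq | hgt
  · -- increasing towards rs
    have hmem : ∀ n, 0 < u n ∧ u n < rs := by
      intro n
      induction n with
      | zero => exact ⟨hr₀, hlt⟩
      | succ n ih =>
        rw [hsucc]
        constructor
        · exact fd_pos hδ hμ ih.1
        · calc fd δ μ (u n) < fd δ μ rs := fd_strictMono hδ hμ ih.2
          _ = rs := hfix
    have hmono : Monotone u := by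
      apply monotone_nat_of_le_succ
      intro n
      rw [hsucc]
      exact (fd_gt_of_lt_fix hδ hμ hfix (hmem n).1 (hmem n).2).le
    have hbdd : BddAbove (range u) := ⟨rs, fun x ⟨n, hn⟩ => hn ▸ (hmem n).2.le⟩
    have hL := tendsto_atTop_ciSup hmono hbdd
    set L := ⨆ n, u n with hLdef
    have hLfix : fd δ μ L = L := by
      have ha : Tendsto (fun n => fd δ μ (u n)) atTop (𝓝 (fd δ μ L)) :=
        ((fd_continuous hδ).tendsto L).comp hL
      have hb : Tendsto (fun n => u (n + 1)) atTop (𝓝 L) :=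
        hL.comp (tendsto_add_atTop_nat 1)
      have hc : (fun n => u (n + 1)) = fun n => fd δ μ (u n) := funext hsucc
      rw [hc] at hb
      exact tendsto_nhds_unique ha hb
    have hL0 : 0 < L := lt_of_lt_of_le hr₀ (le_ciSup hbdd 0)
    have hLle : L ≤ rs := ciSup_le fun n => (hmem n).2.le
    have : L = rs := by
      rcases lt_or_eq_of_le hLle with h | h
      · exfalso
        have := fd_gt_of_lt_fix hδ hμ hfix hL0 h
        rw [hLfix] at this
        exact lt_irrefl _ this
      · exact h
    rwa [this] at hL
  · have hconst : ∀ n, u n = rs := by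
      intro n
      show (fd δ μ)^[n] r₀ = rs
      rw [heq]
      exact Function.iterate_fixed hfix n
    rw [show u = fun _ : ℕ => rs from funext hconst]
    exact tendsto_const_nhds
  · -- decreasing towards rs
    have hmem : ∀ n, rs < u n := by
      intro n
      induction n with
      | zero => exact hgt
      | succ n ih =>
        rw [hsucc]
        calc rs = fd δ μ rs := hfix.symm
        _ < fd δ μ (u n) := fd_strictMono hδ hμ ih
    have hanti : Antitone u := by
      apply antitone_nat_of_succ_le
      intro n
      rw [hsucc]
      exact (fd_lt_of_gt_fix hδ hμ hfix hrs (hmem n)).le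
    have hbdd : BddBelow (range u) := ⟨rs, fun x ⟨n, hn⟩ => hn ▸ (hmem n).le⟩
    have hL := tendsto_atTop_ciInf hanti hbdd
    set L := ⨅ n, u n with hLdef
    have hLfix : fd δ μ L = L := by
      have ha : Tendsto (fun n => fd δ μ (u n)) atTop (𝓝 (fd δ μ L)) :=
        ((fd_continuous hδ).tendsto L).comp hL
      have hb : Tendsto (fun n => u (n + 1)) atTop (𝓝 L) :=
        hL.comp (tendsto_add_atTop_nat 1)
      have hc : (fun n => u (n + 1)) = fun n => fd δ μ (u n) := funext hsucc
      rw [hc] at hb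
      exact tendsto_nhds_unique ha hb
    have hLge : rs ≤ L := le_ciInf fun n => (hmem n).le
    have : L = rs := by
      rcases lt_or_eq_of_le hLge with h | h
      · exfalso
        have := fd_lt_of_gt_fix hδ hμ hfix hrs h
        rw [hLfix] at this
        exact lt_irrefl _ this
      · exact h.symm
    rwa [this] at hL

set_option maxHeartbeats 1000000

/-- For every ε > 0 there is δ > 0 such that for each μ ∈ (1/2,3/2) and α ∈ ℝ there is
a continuous map Ǧ : X → X, ε-close to F, agreeing with the translated Neimark–Sacker
model map on the closed 3δ-ball around p*. Consequently p* is a fixed point, locally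
attracting for 1/2 < μ < 1 and locally repelling for 1 < μ < 3/2, and for 1 < μ < 3/2
the circle of radius r(μ) about p* (with r(μ) the unique positive root of
δ·tanh(μr/δ) = r) is invariant and attracts all orbits starting in the punctured
3δ-ball: the family undergoes a Neimark–Sacker bifurcation at p* as μ crosses 1. -/
theorem perturbed_neimark_sacker :
    ∀ ε : ℝ, 0 < ε →
      ∃ δ : ℝ, 0 < δ ∧
        ∀ μ α : ℝ, 1 / 2 < μ → μ < 3 / 2 →
          ∃ G : ℝ × ℝ → ℝ × ℝ,
            ContinuousOn G X ∧ MapsTo G X X ∧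
            (∀ p ∈ X, euclNorm (G p - F p) < ε) ∧
            (∀ z : ℝ × ℝ, euclNorm (z - pstar) ≤ 3 * δ →
              G z = pstar + Npert δ μ α (z - pstar)) ∧
            G pstar = pstar ∧
            (μ < 1 → ∀ z : ℝ × ℝ, euclNorm (z - pstar) ≤ 3 * δ →
              Tendsto (fun n : ℕ => G^[n] z) atTop (𝓝 pstar)) ∧
            (1 < μ →
              (∃ ρ : ℝ, 0 < ρ ∧ ∀ z : ℝ × ℝ, 0 < euclNorm (z - pstar) →
                euclNorm (z - pstar) < ρ → euclNorm (z - pstar) < euclNorm (G z - pstar)) ∧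
              ∃ r : ℝ, 0 < r ∧ δ * Real.tanh (μ * r / δ) = r ∧
                (∀ r' : ℝ, 0 < r' → δ * Real.tanh (μ * r' / δ) = r' → r' = r) ∧
                (∀ z : ℝ × ℝ, euclNorm (z - pstar) = r → euclNorm (G z - pstar) = r) ∧
                (∀ z : ℝ × ℝ, 0 < euclNorm (z - pstar) → euclNorm (z - pstar) ≤ 3 * δ →
                  Tendsto (fun n : ℕ => euclNorm (G^[n] z - pstar)) atTop (𝓝 r))) := by
  intro ε hε
  obtain ⟨δ₁, hδ₁pos, hδ₁⟩ := Metric.continuousAt_iff.1 continuousAt_F_pstar (ε/8) (by positivity)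
  set δ := min (ε/4) (min (1/10 : ℝ) (δ₁/8)) with hδdef
  have hδpos : 0 < δ := by positivity
  have hδε : δ ≤ ε/4 := min_le_left _ _
  have hδ10 : δ ≤ 1/10 := le_trans (min_le_right _ _) (min_le_left _ _)
  have hδδ1 : δ ≤ δ₁/8 := le_trans (min_le_right _ _) (min_le_right _ _)
  refine ⟨δ, hδpos, ?_⟩
  intro μ α hμlo hμhi
  have hμ : 0 < μ := by linarith
  set φfun : ℝ → ℝ := fun r => min 1 (max 0 ((4*δ - r)/δ)) with hφdef
  set G : ℝ × ℝ → ℝ × ℝ :=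
    fun z => F z + φfun (euclNorm (z - pstar)) • (pstar + Npert δ μ α (z - pstar) - F z)
    with hGdef
  have hφ_mem : ∀ r : ℝ, 0 ≤ φfun r ∧ φfun r ≤ 1 := fun r =>
    ⟨le_min zero_le_one (le_max_left _ _), min_le_left _ _⟩
  have hφ_one : ∀ r : ℝ, r ≤ 3*δ → φfun r = 1 := by
    intro r hr
    have h1 : (1:ℝ) ≤ (4*δ - r)/δ := by
      rw [le_div_iff₀ hδpos]; linarith
    simp only [hφdef]
    rw [min_eq_left (le_max_of_le_right h1)]
  have hφ_zero : ∀ r : ℝ, 4*δ ≤ r → φfun r = 0 := by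
    intro r hr
    have h1 : (4*δ - r)/δ ≤ 0 := div_nonpos_iff.mpr (Or.inr ⟨by linarith, hδpos.le⟩)
    simp only [hφdef]
    rw [max_eq_left h1, min_eq_right zero_le_one]
  have hφ_cont : Continuous φfun := by
    apply Continuous.min continuous_const
    apply Continuous.max continuous_const
    exact (continuous_const.sub continuous_id).div_const δ
  have henorm_cont : Continuous euclNorm := by
    unfold euclNorm
    exact Real.continuous_sqrt.comp ((continuous_fst.pow 2).add (continuous_snd.pow 2))
  have hGball : ∀ z : ℝ × ℝ, euclNorm (z - pstar) ≤ 3 * δ →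
      G z = pstar + Npert δ μ α (z - pstar) := by
    intro z hz
    simp only [hGdef]
    rw [hφ_one _ hz, one_smul]
    abel
  have hstep : ∀ z : ℝ × ℝ, euclNorm (z - pstar) ≤ 3*δ →
      euclNorm (G z - pstar) = fd δ μ (euclNorm (z - pstar)) := by
    intro z hz
    rw [hGball z hz, add_sub_cancel_left, enorm_Npert α hδpos hμ]
    rfl
  have hfd_inv : ∀ r : ℝ, 0 ≤ r → r ≤ 3*δ →
      ∀ n : ℕ, 0 ≤ (fd δ μ)^[n] r ∧ (fd δ μ)^[n] r ≤ 3*δ := by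
    intro r hr0 hr3 n
    induction n with
    | zero => exact ⟨hr0, hr3⟩
    | succ n ih =>
      rw [Function.iterate_succ_apply']
      exact ⟨fd_nonneg hδpos hμ ih.1, le_trans (fd_lt_delta hδpos _).le (by linarith)⟩
  have hIter : ∀ z : ℝ × ℝ, euclNorm (z - pstar) ≤ 3*δ → ∀ n : ℕ,
      euclNorm (G^[n] z - pstar) = (fd δ μ)^[n] (euclNorm (z - pstar)) := by
    intro z hz n
    induction n with
    | zero => rfl
    | succ n ih =>
      rw [Function.iterate_succ_apply', Function.iterate_succ_apply', ← ih]
      apply hstep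
      rw [ih]
      exact (hfd_inv _ (enorm_nonneg _) hz n).2
  have hGcont : ContinuousOn G X := by
    apply ContinuousOn.add continuousOn_F
    apply ContinuousOn.fun_smul
    · exact (hφ_cont.comp (henorm_cont.comp (continuous_id.sub continuous_const))).continuousOn
    · apply ContinuousOn.sub
      · exact (continuous_const.add ((continuous_Npert α hδpos hμ).comp
          (continuous_id.sub continuous_const))).continuousOn
      · exact continuousOn_F
  have hNle : ∀ w : ℝ × ℝ, euclNorm (Npert δ μ α w) ≤ δ := by
    intro w
    rw [enorm_Npert α hδpos hμ]
    calc δ * Real.tanh (μ * euclNorm w / δ) ≤ δ * 1 :=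
      mul_le_mul_of_nonneg_left (my_tanh_lt_one _).le hδpos.le
    _ = δ := mul_one δ
  have hc3 := cstar_gt
  have hc5 := cstar_lt
  have hGmaps : MapsTo G X X := by
    intro z hz
    obtain ⟨hF0, hF1, hF2, hF3, hFc0, hFc1⟩ := X_unpack (mapsTo_F hz)
    obtain ⟨ht0, ht1⟩ := hφ_mem (euclNorm (z - pstar))
    have hN1 : |(Npert δ μ α (z - pstar)).1| ≤ δ := le_trans (abs_fst_le _) (hNle _)
    have hN2 : |(Npert δ μ α (z - pstar)).2| ≤ δ := le_trans (abs_snd_le _) (hNle _)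
    obtain ⟨hN1a, hN1b⟩ := abs_le.1 hN1
    obtain ⟨hN2a, hN2b⟩ := abs_le.1 hN2
    have hg1 : (G z).1 = (F z).1 + φfun (euclNorm (z - pstar)) *
        ((pstar.1 + (Npert δ μ α (z - pstar)).1) - (F z).1) := rfl
    have hg2 : (G z).2 = (F z).2 + φfun (euclNorm (z - pstar)) *
        ((pstar.2 + (Npert δ μ α (z - pstar)).2) - (F z).2) := rfl
    have hp1 : pstar.1 = (3 - Real.sqrt 5)/2 := rfl
    have hp2 : pstar.2 = (3 - Real.sqrt 5)/2 := rfl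
    have hQ1l : (0.2:ℝ) ≤ pstar.1 + (Npert δ μ α (z - pstar)).1 := by
      rw [hp1]; linarith
    have hQ1u : pstar.1 + (Npert δ μ α (z - pstar)).1 ≤ 0.6 := by
      rw [hp1]; linarith
    have hQ2l : (0.2:ℝ) ≤ pstar.2 + (Npert δ μ α (z - pstar)).2 := by
      rw [hp2]; linarith
    have hQ2u : pstar.2 + (Npert δ μ α (z - pstar)).2 ≤ 0.6 := by
      rw [hp2]; linarith
    set t := φfun (euclNorm (z - pstar)) with htdef
    apply X_pack
    refine ⟨?_, ?_, ?_, ?_, ?_, ?_⟩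
    · rw [hg1]
      nlinarith [mul_nonneg (by linarith : (0:ℝ) ≤ 1 - t) hF0,
        mul_nonneg ht0 (by linarith : (0:ℝ) ≤ pstar.1 + (Npert δ μ α (z - pstar)).1)]
    · rw [hg1]
      nlinarith [mul_nonneg (by linarith : (0:ℝ) ≤ 1 - t) (by linarith : (0:ℝ) ≤ 1 - (F z).1),
        mul_nonneg ht0 (by linarith : (0:ℝ) ≤ 1 - (pstar.1 + (Npert δ μ α (z - pstar)).1))]
    · rw [hg2]
      nlinarith [mul_nonneg (by linarith : (0:ℝ) ≤ 1 - t) hF2,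
        mul_nonneg ht0 (by linarith : (0:ℝ) ≤ pstar.2 + (Npert δ μ α (z - pstar)).2)]
    · rw [hg2]
      nlinarith [mul_nonneg (by linarith : (0:ℝ) ≤ 1 - t) (by linarith : (0:ℝ) ≤ 1 - (F z).2),
        mul_nonneg ht0 (by linarith : (0:ℝ) ≤ 1 - (pstar.2 + (Npert δ μ α (z - pstar)).2))]
    · intro habs
      have h1 : (G z).1 = 0 := by rw [habs]
      have h2 : (G z).2 = 0 := by rw [habs]
      rw [hg1] at h1
      rw [hg2] at h2
      rcases ht0.eq_or_lt with h0 | h0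
      · rw [← h0] at h1 h2
        simp only [zero_mul, add_zero] at h1 h2
        exact hFc0 (Prod.ext_iff.2 ⟨h1, h2⟩)
      · nlinarith [mul_nonneg (by linarith : (0:ℝ) ≤ 1 - t) hF0,
          mul_pos h0 (by linarith : (0:ℝ) < pstar.1 + (Npert δ μ α (z - pstar)).1)]
    · intro habs
      have h1 : (G z).1 = 1 := by rw [habs]
      have h2 : (G z).2 = 1 := by rw [habs]
      rw [hg1] at h1
      rw [hg2] at h2
      rcases ht0.eq_or_lt with h0 | h0
      · rw [← h0] at h1 h2
        simp only [zero_mul, add_zero] at h1 h2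
        exact hFc1 (Prod.ext_iff.2 ⟨h1, h2⟩)
      · nlinarith [mul_nonneg (by linarith : (0:ℝ) ≤ 1 - t) (by linarith : (0:ℝ) ≤ 1 - (F z).1),
          mul_pos h0 (by linarith : (0:ℝ) < 1 - (pstar.1 + (Npert δ μ α (z - pstar)).1))]
  have hclose : ∀ p ∈ X, euclNorm (G p - F p) < ε := by
    intro p hp
    have hdiff : G p - F p =
        φfun (euclNorm (p - pstar)) • (pstar + Npert δ μ α (p - pstar) - F p) := by
      simp only [hGdef]
      abel
    by_cases h4 : 4*δ ≤ euclNorm (p - pstar)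
    · rw [hdiff, hφ_zero _ h4, zero_smul]
      have h0 : euclNorm (0 : ℝ × ℝ) = 0 := by simp [euclNorm]
      rw [h0]
      exact hε
    · push_neg at h4
      have hdist : dist p pstar < δ₁ := by
        have hle := dist_le_enorm p pstar
        linarith
      have hFd : dist (F p) pstar < ε/8 := by
        have := hδ₁ hdist
        rwa [F_pstar] at this
      have hFnorm : euclNorm (F p - pstar) ≤ ε/4 := by
        calc euclNorm (F p - pstar) ≤ 2 * dist (F p) pstar := enorm_le_two_dist _ _
        _ ≤ ε/4 := by linarith
      rw [hdiff, euclNorm_smul]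
      have hsv : |φfun (euclNorm (p - pstar))| ≤ 1 :=
        abs_le.2 ⟨by linarith [(hφ_mem (euclNorm (p - pstar))).1], (hφ_mem (euclNorm (p - pstar))).2⟩
      have hvec : euclNorm (pstar + Npert δ μ α (p - pstar) - F p) ≤ δ + ε/4 := by
        have heq2 : pstar + Npert δ μ α (p - pstar) - F p =
            Npert δ μ α (p - pstar) + (-(F p - pstar)) := by abel
        rw [heq2]
        calc euclNorm (Npert δ μ α (p - pstar) + (-(F p - pstar)))
            ≤ euclNorm (Npert δ μ α (p - pstar)) + euclNorm (-(F p - pstar)) := enorm_triangle _ _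
        _ = euclNorm (Npert δ μ α (p - pstar)) + euclNorm (F p - pstar) := by rw [euclNorm_neg]
        _ ≤ δ + ε/4 := add_le_add (hNle _) hFnorm
      calc |φfun (euclNorm (p - pstar))| * euclNorm (pstar + Npert δ μ α (p - pstar) - F p)
          ≤ 1 * (δ + ε/4) := by
            apply mul_le_mul hsv hvec (enorm_nonneg _) zero_le_one
      _ = δ + ε/4 := one_mul _
      _ < ε := by linarith
  have hzero3 : euclNorm (pstar - pstar) ≤ 3*δ := by
    rw [sub_self]
    have h0 : euclNorm (0 : ℝ × ℝ) = 0 := by simp [euclNorm]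
    rw [h0]
    linarith
  have hGpstar : G pstar = pstar := by
    rw [hGball pstar hzero3, sub_self, Npert_zero, add_zero]
  refine ⟨G, hGcont, hGmaps, hclose, hGball, hGpstar, ?_, ?_⟩
  · intro hμ1 z hz
    have hiter := hIter z hz
    have hbound : ∀ n : ℕ, 0 ≤ (fd δ μ)^[n] (euclNorm (z - pstar)) ∧
        (fd δ μ)^[n] (euclNorm (z - pstar)) ≤ μ^n * euclNorm (z - pstar) := by
      intro n
      induction n with
      | zero => exact ⟨enorm_nonneg _, by simp⟩
      | succ n ih =>
        rw [Function.iterate_succ_apply']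
        refine ⟨fd_nonneg hδpos hμ ih.1, ?_⟩
        calc fd δ μ ((fd δ μ)^[n] (euclNorm (z - pstar)))
            ≤ μ * ((fd δ μ)^[n] (euclNorm (z - pstar))) := fd_le_mul hδpos hμ ih.1
        _ ≤ μ * (μ^n * euclNorm (z - pstar)) := mul_le_mul_of_nonneg_left ih.2 hμ.le
        _ = μ^(n+1) * euclNorm (z - pstar) := by ring
    rw [tendsto_iff_dist_tendsto_zero]
    apply squeeze_zero (fun n => dist_nonneg) (g := fun n => μ^n * euclNorm (z - pstar))
    · intro n
      calc dist (G^[n] z) pstar ≤ euclNorm (G^[n] z - pstar) := dist_le_enorm _ _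
      _ = (fd δ μ)^[n] (euclNorm (z - pstar)) := hiter n
      _ ≤ μ^n * euclNorm (z - pstar) := (hbound n).2
    · have hT : Tendsto (fun n : ℕ => μ^n * euclNorm (z - pstar)) atTop (𝓝 (0 * euclNorm (z - pstar))) :=
        (tendsto_pow_atTop_nhds_zero_of_lt_one hμ.le hμ1).mul_const _
      simpa using hT
  · intro hμ1
    obtain ⟨rs, hrs0, hrsδ, hrsfix⟩ := fd_exists_fix hδpos hμ1
    constructor
    · refine ⟨rs, hrs0, ?_⟩
      intro z hz0 hzρ
      have hz3 : euclNorm (z - pstar) ≤ 3*δ := by linarith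
      rw [hstep z hz3]
      exact fd_gt_of_lt_fix hδpos hμ hrsfix hz0 hzρ
    · refine ⟨rs, hrs0, hrsfix, ?_, ?_, ?_⟩
      · intro r' hr'pos hr'fix
        rcases lt_trichotomy r' rs with h | h | h
        · exfalso
          have hgt := fd_gt_of_lt_fix hδpos hμ hrsfix hr'pos h
          rw [show fd δ μ r' = r' from hr'fix] at hgt
          exact lt_irrefl _ hgt
        · exact h
        · exfalso
          have hgt := fd_gt_of_lt_fix hδpos hμ (show fd δ μ r' = r' from hr'fix) hrs0 h
          rw [hrsfix] at hgt
          exact lt_irrefl _ hgt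
      · intro z hz
        have hz3 : euclNorm (z - pstar) ≤ 3*δ := by rw [hz]; linarith
        rw [hstep z hz3, hz]
        exact hrsfix
      · intro z hz0 hz3
        exact Tendsto.congr (fun n => (hIter z hz3 n).symm)
          (fd_iter_tendsto hδpos hμ hrsfix hrs0 hz0)
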